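/- Cardy's function u(s) = s^{1/3}·₂F₁(1/3,2/3;4/3;s) satisfies 2(1-2s) u'(s) + 3s(1-s) u''(s) = 0 for s ∈ (0,1). -/

import Mathlib

open Set


open scoped Nat

/-- The Gauss hypergeometric function ₂F₁(a,b;c;s) defined by its series (real). -/
noncomputable def hyp2F1 (a b c s : ℝ) : ℝ :=
  ∑' n : ℕ, (ascPochhammer ℝ n).eval a * (ascPochhammer ℝ n).eval b /
      ((ascPochhammer ℝ n).eval c * (n ! : ℝ)) * s ^ n

/-- (Unnormalized) Cardy function u(s) = s^{1/3} ₂F₁(1/3,2/3;4/3;s). -/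
noncomputable def cardyFn (s : ℝ) : ℝ := s ^ ((1:ℝ)/3) * hyp2F1 (1/3) (2/3) (4/3) s


noncomputable def pk (n : ℕ) (x : ℝ) : ℝ := (ascPochhammer ℝ n).eval x
lemma pk_zero (x : ℝ) : pk 0 x = 1 := by simp [pk]
lemma pk_succ (n : ℕ) (x : ℝ) : pk (n+1) x = pk n x * (x + n) := by
  simp [pk, ascPochhammer_succ_eval]
lemma pk_succ_left (n : ℕ) (x : ℝ) : pk (n+1) x = x * pk n (x+1) := by
  simp [pk, ascPochhammer_succ_left, Polynomial.eval_comp]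
lemma pk_pos (n : ℕ) {x : ℝ} (hx : 0 < x) : 0 < pk n x := by
  induction n with
  | zero => simp [pk_zero]
  | succ n ih => rw [pk_succ]; positivity
lemma pk_mono (n : ℕ) {x y : ℝ} (hx : 0 < x) (hxy : x ≤ y) : pk n x ≤ pk n y := by
  induction n with
  | zero => simp [pk_zero]
  | succ n ih =>
      rw [pk_succ, pk_succ]
      have h := pk_pos n hx
      gcongr
      · linarith
lemma pk_le_factorial (n : ℕ) {x : ℝ} (hx : 0 < x) (hx1 : x ≤ 1) : pk n x ≤ (n ! : ℝ) := by
  induction n with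
  | zero => simp [pk_zero]
  | succ n ih =>
      rw [pk_succ, Nat.factorial_succ]
      push_cast
      have h1 : pk n x * (x + n) ≤ (n ! : ℝ) * (1 + n) := by
        have := pk_pos n hx
        gcongr
      linarith [h1]

noncomputable def cc (n : ℕ) : ℝ := pk n (1/3) * pk n (2/3) / (pk n (4/3) * (n ! : ℝ))
noncomputable def bb (n : ℕ) : ℝ := pk n (2/3) / (n ! : ℝ)

lemma fact_pos' (n : ℕ) : (0:ℝ) < (n ! : ℝ) := by positivity

lemma cc_nonneg (n : ℕ) : 0 ≤ cc n := by
  unfold cc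
  have h1 := pk_pos n (show (0:ℝ) < 1/3 by norm_num)
  have h2 := pk_pos n (show (0:ℝ) < 2/3 by norm_num)
  have h3 := pk_pos n (show (0:ℝ) < 4/3 by norm_num)
  positivity

lemma bb_nonneg (n : ℕ) : 0 ≤ bb n := by
  unfold bb
  have h2 := pk_pos n (show (0:ℝ) < 2/3 by norm_num)
  positivity

lemma bb_le_one (n : ℕ) : bb n ≤ 1 := by
  unfold bb
  rw [div_le_one (fact_pos' n)]
  exact pk_le_factorial n (by norm_num) (by norm_num)

lemma cc_le_one (n : ℕ) : cc n ≤ 1 := by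
  unfold cc
  have h3 := pk_pos n (show (0:ℝ) < 1/3 by norm_num)
  have h4 := pk_pos n (show (0:ℝ) < 2/3 by norm_num)
  have h5 := pk_pos n (show (0:ℝ) < 4/3 by norm_num)
  have h6 := fact_pos' n
  rw [div_le_one (by positivity)]
  have h1 : pk n (1/3) ≤ pk n (4/3) := pk_mono n (by norm_num) (by norm_num)
  have h2 : pk n (2/3) ≤ (n ! : ℝ) := pk_le_factorial n (by norm_num) (by norm_num)
  gcongr

lemma ccb (n : ℕ) : cc n * (3*n+1) = bb n := by
  have key2 : pk (n+1) (1/3) = (1/3) * pk n (4/3) := by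
    rw [pk_succ_left]; norm_num
  have key : pk n (1/3) * (3*(n:ℝ)+1) = pk n (4/3) := by
    have h := pk_succ n (1/3)
    rw [key2] at h
    linear_combination -3 * h
  have h3 := (pk_pos n (show (0:ℝ) < 4/3 by norm_num)).ne'
  have hf := (fact_pos' n).ne'
  unfold cc bb
  rw [div_mul_eq_mul_div, mul_right_comm, key]
  field_simp

lemma bbrec (n : ℕ) : bb (n+1) * (n+1) = bb n * (n + 2/3) := by
  have hf := (fact_pos' n).ne'
  have hf1 := (fact_pos' (n+1)).ne'
  unfold bb
  rw [pk_succ, Nat.factorial_succ]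
  push_cast
  field_simp
  ring

lemma summable_coeff {a : ℕ → ℝ} {C : ℝ} (ha : ∀ n, |a n| ≤ C) {x : ℝ} (hx : |x| < 1) :
    Summable fun n => a n * x ^ n := by
  apply Summable.of_norm
  apply Summable.of_nonneg_of_le (fun n => norm_nonneg _)
    (fun n => ?_) ((summable_geometric_of_lt_one (abs_nonneg x) hx).mul_left C)
  rw [norm_mul, norm_pow]
  have h0 : (0:ℝ) ≤ |x| ^ n := by positivity
  calc ‖a n‖ * ‖x‖ ^ n = |a n| * |x| ^ n := by simp [Real.norm_eq_abs]
    _ ≤ C * |x| ^ n := by gcongr; exact ha n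

lemma summable_dcoeff {a : ℕ → ℝ} {C : ℝ} (ha : ∀ n, |a n| ≤ C) {x : ℝ} (hx : |x| < 1) :
    Summable fun n => a n * ((n : ℝ) * x ^ (n - 1)) := by
  apply Summable.of_norm
  have hs : Summable fun n : ℕ => C * ((n:ℝ) * |x| ^ (n-1)) := by
    rw [← summable_nat_add_iff 1]
    have h2 : Summable fun n : ℕ => ((n:ℝ)+1) * |x| ^ n := by
      have g1 := summable_pow_mul_geometric_of_norm_lt_one 1 (by rwa [Real.norm_eq_abs, abs_abs])
      have g2 := summable_geometric_of_lt_one (abs_nonneg x) hx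
      simpa [add_mul, pow_one] using g1.add g2
    simpa [mul_assoc] using h2.mul_left C
  apply Summable.of_nonneg_of_le (fun n => norm_nonneg _) (fun n => ?_) hs
  have hC : 0 ≤ C := le_trans (abs_nonneg _) (ha 0)
  rw [norm_mul, norm_mul, norm_pow]
  simp only [Real.norm_eq_abs, Nat.abs_cast, abs_abs]
  gcongr
  exact ha n

lemma hasDerivAt_psum {a : ℕ → ℝ} {C : ℝ} (ha : ∀ n, |a n| ≤ C) {x : ℝ} (hx : |x| < 1) :
    HasDerivAt (fun y => ∑' n, a n * y ^ n) (∑' n, (a (n+1) * (n+1)) * x ^ n) x := by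
  have hC : 0 ≤ C := le_trans (abs_nonneg _) (ha 0)
  set r : ℝ := (1 + |x|) / 2 with hr
  have hxr : |x| < r := by rw [hr]; linarith
  have hr1 : r < 1 := by rw [hr]; linarith
  have hr0 : 0 < r := lt_of_le_of_lt (abs_nonneg x) hxr
  have key : HasDerivAt (fun y => ∑' n, a n * y ^ n)
      (∑' n, a n * ((n : ℝ) * x ^ (n - 1))) x := by
    apply hasDerivAt_tsum_of_isPreconnected
      (u := fun (n : ℕ) => C * ((n:ℝ) * r ^ (n-1)))
      (g' := fun (n : ℕ) (y : ℝ) => a n * ((n : ℝ) * y ^ (n - 1))) ?_ isOpen_Ioo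
      (convex_Ioo (-r) r).isPreconnected
      (fun n y _ => (hasDerivAt_pow n y).const_mul (a n))
      (fun n y hy => ?_) (mem_Ioo.2 ⟨by linarith, hr0⟩ : (0:ℝ) ∈ Ioo (-r) r)
      ?_ (mem_Ioo.2 (abs_lt.1 hxr))
    · rw [← summable_nat_add_iff 1]
      have h2 : Summable fun n : ℕ => ((n:ℝ)+1) * r ^ n := by
        have g1 := summable_pow_mul_geometric_of_norm_lt_one 1
          (show ‖r‖ < 1 by rwa [Real.norm_eq_abs, abs_of_pos hr0])
        have g2 := summable_geometric_of_lt_one hr0.le hr1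
        simpa [add_mul, pow_one] using g1.add g2
      simpa [mul_assoc] using h2.mul_left C
    · apply Summable.of_norm
      apply (summable_geometric_of_lt_one hr0.le hr1).mul_left C |>.of_nonneg_of_le
        (fun n => norm_nonneg _) (fun n => ?_)
      rw [norm_mul, norm_pow]
      simp only [Real.norm_eq_abs, norm_zero]
      rcases Nat.eq_zero_or_pos n with h | h
      · subst h; simpa using ha 0
      · rw [zero_pow h.ne']
        simp; positivity
    · have hyr : |y| ≤ r := by
        rw [abs_le]; exact ⟨(mem_Ioo.1 hy).1.le, (mem_Ioo.1 hy).2.le⟩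
      rw [Real.norm_eq_abs, abs_mul, abs_mul, abs_pow]
      simp only [Nat.abs_cast]
      gcongr
      · exact ha n
  convert key using 1
  rw [Summable.tsum_eq_zero_add (summable_dcoeff ha hx)]
  simp only [Nat.cast_zero, zero_mul, mul_zero, zero_add, Nat.add_sub_cancel]
  apply tsum_congr; intro n
  push_cast; ring

noncomputable def BB (s : ℝ) : ℝ := ∑' n, bb n * s ^ n
noncomputable def gg (s : ℝ) : ℝ := ∑' n, cc n * s ^ n

lemma ha_bb : ∀ n, |bb n| ≤ 1 := fun n => abs_le.2 ⟨by linarith [bb_nonneg n], bb_le_one n⟩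
lemma ha_cc : ∀ n, |cc n| ≤ 1 := fun n => abs_le.2 ⟨by linarith [cc_nonneg n], cc_le_one n⟩

/-- Summability of `∑ (a n * n) x^n`. -/
lemma summable_shift {a : ℕ → ℝ} {C : ℝ} (ha : ∀ n, |a n| ≤ C) {x : ℝ} (hx : |x| < 1) :
    Summable fun n : ℕ => (a n * n) * x ^ n := by
  apply ((summable_dcoeff ha hx).mul_right x).congr
  intro n
  rcases Nat.eq_zero_or_pos n with h | h
  · subst h; simp
  · have hn : n - 1 + 1 = n := Nat.succ_pred_eq_of_pos h
    rw [← hn, pow_succ]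
    push_cast
    ring

/-- Reindexing: `x * ∑ a(n+1)(n+1) x^n = ∑ (a n * n) x^n`. -/
lemma shift_reindex {a : ℕ → ℝ} {C : ℝ} (ha : ∀ n, |a n| ≤ C) {x : ℝ} (hx : |x| < 1) :
    x * (∑' n, (a (n+1) * (n+1)) * x ^ n) = ∑' n, (a n * n) * x ^ n := by
  rw [← tsum_mul_left, Summable.tsum_eq_zero_add (summable_shift ha hx)]
  simp only [Nat.cast_zero, mul_zero, zero_mul, zero_add]
  apply tsum_congr; intro n
  push_cast; ring

/-- The identity `(1/3) g + x g' = (1/3) B`. -/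
lemma shift_sum {x : ℝ} (hx : |x| < 1) :
    (1/3) * gg x + x * (∑' n, (cc (n+1) * (n+1)) * x ^ n) = (1/3) * BB x := by
  rw [shift_reindex ha_cc hx]
  have hsum : Summable fun n : ℕ => (cc n * n) * x ^ n := summable_shift ha_cc hx
  have hsum1 : Summable fun n : ℕ => ((1/3) * cc n) * x ^ n := by
    apply summable_coeff (C := 1) (fun n => ?_) hx
    rw [abs_mul]
    have h := ha_cc n
    have h0 := abs_nonneg (cc n)
    rw [show |(1:ℝ)/3| = 1/3 by norm_num]
    nlinarith
  have h2 : (1/3) * gg x = ∑' n, ((1/3) * cc n) * x ^ n := by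
    unfold gg; rw [← tsum_mul_left]; apply tsum_congr; intro n; ring
  have h3 : (1/3) * BB x = ∑' n, ((1/3) * bb n) * x ^ n := by
    unfold BB; rw [← tsum_mul_left]; apply tsum_congr; intro n; ring
  rw [h2, h3, ← Summable.tsum_add hsum1 hsum]
  apply tsum_congr; intro n
  linear_combination (x ^ n / 3) * ccb n

/-- The identity `(1-x) B' = (2/3) B`. -/
lemma BB_deriv_id {x : ℝ} (hx : |x| < 1) :
    (1 - x) * (∑' n, (bb (n+1) * (n+1)) * x ^ n) = (2/3) * BB x := by
  have hsum : Summable fun n : ℕ => (bb n * n) * x ^ n := summable_shift ha_bb hx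
  have hsumD : Summable fun n : ℕ => (bb (n+1) * (n+1)) * x ^ n := by
    apply ((summable_nat_add_iff 1).2 (summable_dcoeff ha_bb hx)).congr
    intro n
    simp only [Nat.add_sub_cancel]
    push_cast; ring
  have h1 : (1 - x) * (∑' n, (bb (n+1) * (n+1)) * x ^ n)
      = (∑' n, (bb (n+1) * (n+1)) * x ^ n) - ∑' n, (bb n * n) * x ^ n := by
    rw [← shift_reindex ha_bb hx]; ring
  rw [h1, ← Summable.tsum_sub hsumD hsum]
  have h3 : (2/3) * BB x = ∑' n, ((2/3) * bb n) * x ^ n := by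
    unfold BB; rw [← tsum_mul_left]; apply tsum_congr; intro n; ring
  rw [h3]
  apply tsum_congr; intro n
  linear_combination (x ^ n) * bbrec n

lemma BB_zero : BB 0 = 1 := by
  unfold BB
  rw [tsum_eq_single 0 (fun n hn => by simp [zero_pow hn])]
  simp [bb, pk_zero]

lemma BB_hasDerivAt {x : ℝ} (hx : |x| < 1) :
    HasDerivAt BB (∑' n, (bb (n+1) * (n+1)) * x ^ n) x := hasDerivAt_psum ha_bb hx

lemma h_deriv_zero {t : ℝ} (ht : t ∈ Ioo (-1:ℝ) 1) :
    HasDerivAt (fun u => (1-u) ^ ((2:ℝ)/3) * BB u) 0 t := by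
  have ht1 : (0:ℝ) < 1 - t := by linarith [ht.2]
  have htabs : |t| < 1 := abs_lt.2 ⟨ht.1, ht.2⟩
  have hB := BB_hasDerivAt htabs
  have hr : HasDerivAt (fun u : ℝ => (1-u) ^ ((2:ℝ)/3))
      (-1 * ((2:ℝ)/3) * (1-t) ^ ((2:ℝ)/3 - 1)) t :=
    HasDerivAt.rpow_const ((hasDerivAt_id t).const_sub 1) (Or.inl ht1.ne')
  have h := hr.mul hB
  convert h using 1
  · rfl
  · rfl
  · rfl
  have e1 : (1-t) ^ ((2:ℝ)/3 - 1) = (1-t) ^ ((2:ℝ)/3) / (1-t) := by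
    rw [Real.rpow_sub ht1, Real.rpow_one]
  have hid := BB_deriv_id htabs
  rw [e1]
  field_simp
  linear_combination (-3 * (1-t) ^ ((2:ℝ)/3)) * hid

lemma BB_eq {s : ℝ} (hs : s ∈ Ioo (0:ℝ) 1) : BB s = (1-s) ^ (-(2/3) : ℝ) := by
  have hs1 : (0:ℝ) < 1 - s := by linarith [hs.2]
  have key : (1-s) ^ ((2:ℝ)/3) * BB s = 1 := by
    have hmem : ∀ x ∈ Icc (0:ℝ) s, x ∈ Ioo (-1:ℝ) 1 := fun x hx =>
      ⟨by linarith [hx.1], by linarith [hx.2, hs.2]⟩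
    have h0 := constant_of_has_deriv_right_zero
      (f := fun u => (1-u) ^ ((2:ℝ)/3) * BB u) (a := 0) (b := s)
      (fun x hx => ((h_deriv_zero (hmem x hx)).continuousAt).continuousWithinAt)
      (fun x hx => (h_deriv_zero (hmem x ⟨hx.1, hx.2.le⟩)).hasDerivWithinAt)
      s (right_mem_Icc.2 hs.1.le)
    simpa [BB_zero] using h0
  rw [Real.rpow_neg hs1.le]
  exact eq_inv_of_mul_eq_one_left (by linear_combination key)

lemma cardy_hasDerivAt {s : ℝ} (hs : s ∈ Ioo (0:ℝ) 1) :
    HasDerivAt cardyFn ((1/3) * (s ^ (-(2/3):ℝ) * (1-s) ^ (-(2/3):ℝ))) s := by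
  have hs0 := hs.1
  have habs : |s| < 1 := abs_lt.2 ⟨by linarith, hs.2⟩
  have hg : HasDerivAt gg (∑' n, (cc (n+1) * (n+1)) * s ^ n) s := hasDerivAt_psum ha_cc habs
  have hr : HasDerivAt (fun y : ℝ => y ^ ((1:ℝ)/3)) ((1:ℝ)/3 * s ^ ((1:ℝ)/3 - 1)) s :=
    Real.hasDerivAt_rpow_const (Or.inl hs0.ne')
  have hcf : cardyFn = fun y => y ^ ((1:ℝ)/3) * gg y := rfl
  rw [hcf]
  convert hr.mul hg using 1
  · rfl
  · rfl
  · rfl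
  have hss := shift_sum habs
  rw [BB_eq hs] at hss
  have h' := Real.rpow_add hs0 (-(2/3)) 1
  rw [Real.rpow_one] at h'
  have e13 : s ^ ((1:ℝ)/3) = s ^ (-(2/3):ℝ) * s := by
    rw [← h']
    norm_num
  have e23 : s ^ ((1:ℝ)/3 - 1) = s ^ (-(2/3):ℝ) := by
    rw [show ((1:ℝ)/3 - 1) = -(2/3) by norm_num]
  rw [e13, e23]
  linear_combination (-(s ^ (-(2/3):ℝ))) * hss

/-- Cardy's function satisfies 2(1-2s) u'(s) + 3s(1-s) u''(s) = 0 on (0,1). -/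
theorem cardy_ode (s : ℝ) (hs : s ∈ Set.Ioo (0:ℝ) 1) :
    2 * (1 - 2*s) * deriv cardyFn s + 3 * s * (1 - s) * deriv (deriv cardyFn) s = 0 := by

  have hs0 := hs.1
  have hs1 : (0:ℝ) < 1 - s := by linarith [hs.2]
  have hd1 : deriv cardyFn s = (1/3) * (s ^ (-(2/3):ℝ) * (1-s) ^ (-(2/3):ℝ)) :=
    (cardy_hasDerivAt hs).deriv
  have hev : deriv cardyFn =ᶠ[nhds s]
      (fun t => (1/3) * (t ^ (-(2/3):ℝ) * (1-t) ^ (-(2/3):ℝ))) := by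
    filter_upwards [Ioo_mem_nhds hs.1 hs.2] with t ht
    exact (cardy_hasDerivAt ht).deriv
  have hA : HasDerivAt (fun t : ℝ => t ^ (-(2/3):ℝ)) ((-(2/3)) * s ^ ((-(2/3):ℝ) - 1)) s :=
    Real.hasDerivAt_rpow_const (Or.inl hs0.ne')
  have hB : HasDerivAt (fun t : ℝ => (1-t) ^ (-(2/3):ℝ))
      (-1 * (-(2/3)) * (1-s) ^ ((-(2/3):ℝ) - 1)) s :=
    HasDerivAt.rpow_const ((hasDerivAt_id s).const_sub 1) (Or.inl hs1.ne')
  have hφ := (hA.mul hB).const_mul ((1:ℝ)/3)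
  have hd2 : deriv (deriv cardyFn) s =
      (1/3) * ((-(2/3)) * s ^ ((-(2/3):ℝ) - 1) * (1-s) ^ (-(2/3):ℝ)
        + s ^ (-(2/3):ℝ) * (-1 * (-(2/3)) * (1-s) ^ ((-(2/3):ℝ) - 1))) := by
    rw [hev.deriv_eq]
    exact hφ.deriv
  rw [hd1, hd2, Real.rpow_sub hs0, Real.rpow_sub hs1, Real.rpow_one, Real.rpow_one]
  field_simp
  ring
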